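/- The logic N4CK has the Constructible Falsity Property: for all formulas φ, ψ of the conditional language, ~(φ ∧ ψ) is valid in all Nelsonian conditional models if and only if at least one of ~φ, ~ψ is valid in all Nelsonian conditional models. -/

import Mathlib

/-!
If `~φ` fails at a world `w₁` of `M₁` and `~ψ` fails at a world `w₂` of `M₂`, put `M₁` and
`M₂` side by side below a fresh root. The inclusions of the summands are bounded morphisms, so
`w₁` and `w₂` are evaluated there as in `M₁` and `M₂`. The root verifies `~(φ ∧ ψ)`, i.e.
falsifies `φ` or `ψ`, and by heredity this falsification reaches `w₁` or `w₂`, a contradiction.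
-/

inductive CForm : Type where
  | var : Nat → CForm
  | and : CForm → CForm → CForm
  | or  : CForm → CForm → CForm
  | neg : CForm → CForm
  | imp : CForm → CForm → CForm
  | cond : CForm → CForm → CForm

/-- A Nelsonian conditional model: a Nelsonian model together with a
bi-set-indexed accessibility relation satisfying (c1) and (c2). -/
structure CNModel where
  W : Type
  le : W → W → Prop
  refl : ∀ w, le w w
  trans : ∀ {a b c}, le a b → le b c → le a c
  Vp : Nat → W → Prop
  Vn : Nat → W → Prop
  monoP : ∀ (n : Nat) {w v}, le w v → Vp n w → Vp n v
  monoN : ∀ (n : Nat) {w v}, le w v → Vn n w → Vn n v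
  R : W → Set W × Set W → W → Prop
  c1 : ∀ (XY : Set W × Set W) {w w' v}, le w w' → R w XY v → ∃ v', R w' XY v' ∧ le v v'
  c2 : ∀ (XY : Set W × Set W) {w v v'}, R w XY v → le v v' → ∃ w', le w w' ∧ R w' XY v'

/-- Verification (`true`) and falsification (`false`) in a Nelsonian conditional model. -/
def CNModel.sat (M : CNModel) : CForm → Bool → M.W → Prop
  | .var n, true, w => M.Vp n w
  | .var n, false, w => M.Vn n w
  | .and φ ψ, true, w => M.sat φ true w ∧ M.sat ψ true w
  | .and φ ψ, false, w => M.sat φ false w ∨ M.sat ψ false w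
  | .or φ ψ, true, w => M.sat φ true w ∨ M.sat ψ true w
  | .or φ ψ, false, w => M.sat φ false w ∧ M.sat ψ false w
  | .neg φ, b, w => M.sat φ (!b) w
  | .imp φ ψ, true, w => ∀ v, M.le w v → M.sat φ true v → M.sat ψ true v
  | .imp φ ψ, false, w => M.sat φ true w ∧ M.sat ψ false w
  | .cond φ ψ, true, w =>
      ∀ v u, M.le w v → M.R v ({x | M.sat φ true x}, {x | M.sat φ false x}) u →
        M.sat ψ true u
  | .cond φ ψ, false, w =>
      ∃ u, M.R w ({x | M.sat φ true x}, {x | M.sat φ false x}) u ∧ M.sat ψ false u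

/-- N4CK-validity: verified at every world of every Nelsonian conditional model. -/
def CValid (φ : CForm) : Prop := ∀ (M : CNModel) (w : M.W), M.sat φ true w

namespace CNModel

theorem sat_mono (M : CNModel) (φ : CForm) (b : Bool) {w v : M.W} (h : M.le w v) :
    M.sat φ b w → M.sat φ b v := by
  induction φ generalizing b w v with
  | var n => cases b; exacts [M.monoN n h, M.monoP n h]
  | and φ ψ ihφ ihψ =>
    cases b
    · exact Or.imp (ihφ false h) (ihψ false h)
    · exact And.imp (ihφ true h) (ihψ true h)
  | or φ ψ ihφ ihψ =>
    cases b
    · exact And.imp (ihφ false h) (ihψ false h)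
    · exact Or.imp (ihφ true h) (ihψ true h)
  | neg φ ihφ => exact ihφ (!b) h
  | imp φ ψ ihφ ihψ =>
    cases b
    · exact And.imp (ihφ true h) (ihψ false h)
    · exact fun hw v' hv' => hw v' (M.trans h hv')
  | cond φ ψ ihφ ihψ =>
    cases b
    · rintro ⟨u, hu, hψu⟩
      obtain ⟨u', hu', huu'⟩ := M.c1 _ h hu
      exact ⟨u', hu', ihψ false huu' hψu⟩
    · exact fun hw v' u hv' => hw v' u (M.trans h hv')

structure BoundedMorphism (M N : CNModel) where
  toFun : M.W → N.W
  le_map : ∀ {a b}, M.le a b → N.le (toFun a) (toFun b)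
  le_back : ∀ {a y}, N.le (toFun a) y → ∃ b, M.le a b ∧ toFun b = y
  Vp_iff : ∀ n a, N.Vp n (toFun a) ↔ M.Vp n a
  Vn_iff : ∀ n a, N.Vn n (toFun a) ↔ M.Vn n a
  R_map : ∀ {a b} (XY : Set N.W × Set N.W),
    M.R a (toFun ⁻¹' XY.1, toFun ⁻¹' XY.2) b → N.R (toFun a) XY (toFun b)
  R_back : ∀ {a y} (XY : Set N.W × Set N.W),
    N.R (toFun a) XY y → ∃ b, M.R a (toFun ⁻¹' XY.1, toFun ⁻¹' XY.2) b ∧ toFun b = y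

namespace BoundedMorphism

variable {M N : CNModel} (f : BoundedMorphism M N)

theorem sat_iff (φ : CForm) (b : Bool) (a : M.W) :
    N.sat φ b (f.toFun a) ↔ M.sat φ b a := by
  induction φ generalizing b a with
  | var n => cases b; exacts [f.Vn_iff n a, f.Vp_iff n a]
  | and φ ψ ihφ ihψ => cases b <;> simp only [sat, ihφ, ihψ]
  | or φ ψ ihφ ihψ => cases b <;> simp only [sat, ihφ, ihψ]
  | neg φ ihφ => exact ihφ (!b) a
  | imp φ ψ ihφ ihψ =>
    cases b
    · simp only [sat, ihφ, ihψ]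
    · constructor
      · intro h a' ha' hφ
        exact (ihψ true a').1 (h _ (f.le_map ha') ((ihφ true a').2 hφ))
      · intro h y hy hφ
        obtain ⟨a', ha', rfl⟩ := f.le_back hy
        exact (ihψ true a').2 (h a' ha' ((ihφ true a').1 hφ))
  | cond φ ψ ihφ ihψ =>
    have hext : (f.toFun ⁻¹' {x | N.sat φ true x}, f.toFun ⁻¹' {x | N.sat φ false x})
        = ({x | M.sat φ true x}, {x | M.sat φ false x}) := by
      ext x <;> exact ihφ _ x
    have R_map {a u : M.W} (h : M.R a ({x | M.sat φ true x}, {x | M.sat φ false x}) u) :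
        N.R (f.toFun a) ({x | N.sat φ true x}, {x | N.sat φ false x}) (f.toFun u) :=
      f.R_map _ (hext ▸ h)
    have R_back {a : M.W} {y : N.W}
        (h : N.R (f.toFun a) ({x | N.sat φ true x}, {x | N.sat φ false x}) y) :
        ∃ u, M.R a ({x | M.sat φ true x}, {x | M.sat φ false x}) u ∧ f.toFun u = y :=
      hext ▸ f.R_back _ h
    cases b
    · constructor
      · rintro ⟨y, hy, hψ⟩
        obtain ⟨u, hu, rfl⟩ := R_back hy
        exact ⟨u, hu, (ihψ false u).1 hψ⟩
      · rintro ⟨u, hu, hψ⟩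
        exact ⟨f.toFun u, R_map hu, (ihψ false u).2 hψ⟩
    · constructor
      · intro h a' u ha' hu
        exact (ihψ true u).1 (h _ _ (f.le_map ha') (R_map hu))
      · intro h y z hy hz
        obtain ⟨a', ha', rfl⟩ := f.le_back hy
        obtain ⟨u, hu, rfl⟩ := R_back hz
        exact (ihψ true u).2 (h a' u ha' hu)

end BoundedMorphism

section RootedSum

variable (M₁ M₂ : CNModel)

inductive RootedSumLe : Option (M₁.W ⊕ M₂.W) → Option (M₁.W ⊕ M₂.W) → Prop
  | root (y) : RootedSumLe none y
  | inl {a b} : M₁.le a b → RootedSumLe (some (.inl a)) (some (.inl b))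
  | inr {a b} : M₂.le a b → RootedSumLe (some (.inr a)) (some (.inr b))

inductive RootedSumR :
    Option (M₁.W ⊕ M₂.W) → Set (Option (M₁.W ⊕ M₂.W)) × Set (Option (M₁.W ⊕ M₂.W)) →
      Option (M₁.W ⊕ M₂.W) → Prop
  | inl {a b XY} : M₁.R a ((some ∘ .inl) ⁻¹' XY.1, (some ∘ .inl) ⁻¹' XY.2) b →
      RootedSumR (some (.inl a)) XY (some (.inl b))
  | inr {a b XY} : M₂.R a ((some ∘ .inr) ⁻¹' XY.1, (some ∘ .inr) ⁻¹' XY.2) b →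
      RootedSumR (some (.inr a)) XY (some (.inr b))

def rootedSum : CNModel where
  W := Option (M₁.W ⊕ M₂.W)
  le := RootedSumLe M₁ M₂
  refl
    | none => .root _
    | some (.inl a) => .inl (M₁.refl a)
    | some (.inr a) => .inr (M₂.refl a)
  trans := by
    rintro _ _ _ (_ | ⟨h⟩ | ⟨h⟩) h'
    · exact .root _
    · cases h'; exact .inl (M₁.trans h ‹_›)
    · cases h'; exact .inr (M₂.trans h ‹_›)
  Vp n w := w.elim False (Sum.elim (M₁.Vp n) (M₂.Vp n))
  Vn n w := w.elim False (Sum.elim (M₁.Vn n) (M₂.Vn n))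
  monoP n := by
    rintro _ _ (_ | ⟨h⟩ | ⟨h⟩) hv
    exacts [hv.elim, M₁.monoP n h hv, M₂.monoP n h hv]
  monoN n := by
    rintro _ _ (_ | ⟨h⟩ | ⟨h⟩) hv
    exacts [hv.elim, M₁.monoN n h hv, M₂.monoN n h hv]
  R := RootedSumR M₁ M₂
  c1 XY := by
    rintro _ _ _ (_ | ⟨h⟩ | ⟨h⟩) hR
    · cases hR
    · cases hR with | inl hR =>
      obtain ⟨v', hv', hvv'⟩ := M₁.c1 _ h hR
      exact ⟨some (.inl v'), .inl hv', .inl hvv'⟩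
    · cases hR with | inr hR =>
      obtain ⟨v', hv', hvv'⟩ := M₂.c1 _ h hR
      exact ⟨some (.inr v'), .inr hv', .inr hvv'⟩
  c2 XY := by
    rintro _ _ _ (hR | hR) h
    · cases h with | inl h =>
      obtain ⟨w', hww', hw'⟩ := M₁.c2 _ hR h
      exact ⟨some (.inl w'), .inl hww', .inl hw'⟩
    · cases h with | inr h =>
      obtain ⟨w', hww', hw'⟩ := M₂.c2 _ hR h
      exact ⟨some (.inr w'), .inr hww', .inr hw'⟩

def rootedSum.inl : BoundedMorphism M₁ (rootedSum M₁ M₂) where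
  toFun := some ∘ .inl
  le_map := .inl
  le_back := by rintro _ _ (_ | ⟨h⟩); exact ⟨_, h, rfl⟩
  Vp_iff _ _ := .rfl
  Vn_iff _ _ := .rfl
  R_map _ := .inl
  R_back := by rintro _ _ _ (h | _); exact ⟨_, h, rfl⟩

def rootedSum.inr : BoundedMorphism M₂ (rootedSum M₁ M₂) where
  toFun := some ∘ .inr
  le_map := .inr
  le_back := by rintro _ _ (_ | _ | ⟨h⟩); exact ⟨_, h, rfl⟩
  Vp_iff _ _ := .rfl
  Vn_iff _ _ := .rfl
  R_map _ := .inr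
  R_back := by rintro _ _ _ (_ | h); exact ⟨_, h, rfl⟩

end RootedSum

end CNModel

theorem n4ck_cfp (φ ψ : CForm) :
    CValid (.neg (.and φ ψ)) ↔ (CValid (.neg φ) ∨ CValid (.neg ψ)) := by
  refine ⟨fun h => ?_, fun h M w => h.imp (· M w) (· M w)⟩
  by_contra! hc
  obtain ⟨⟨M₁, w₁, hw₁⟩, ⟨M₂, w₂, hw₂⟩⟩ :
      (∃ (M : CNModel) (w : M.W), ¬M.sat φ false w) ∧
        ∃ (M : CNModel) (w : M.W), ¬M.sat ψ false w := by
    simpa [CValid, CNModel.sat] using hc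
  let N := M₁.rootedSum M₂
  have root : N.sat φ false none ∨ N.sat ψ false none := h N none
  rcases root with hφ | hψ
  · exact hw₁ <| ((CNModel.rootedSum.inl M₁ M₂).sat_iff φ false w₁).1 <|
      N.sat_mono φ false (.root _) hφ
  · exact hw₂ <| ((CNModel.rootedSum.inr M₁ M₂).sat_iff ψ false w₂).1 <|
      N.sat_mono ψ false (.root _) hψ
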